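/- For a positive integer n, there exists a connected simple graph of order n whose three metric subgraphs (central, annular, and peripheral subgraphs) are all nonempty, connected, and pairwise isomorphic if and only if n ≥ 24 and n is divisible by 3. -/

import Mathlib

/-- Eccentricity of a vertex in a (finite connected) simple graph:
the maximum distance from `v` to any vertex. -/
noncomputable def SimpleGraph.mecc {V : Type*} (G : SimpleGraph V) (v : V) : ℕ :=
  sSup (Set.range (G.dist v))

/-- Radius: the minimum eccentricity. -/
noncomputable def SimpleGraph.mrad {V : Type*} (G : SimpleGraph V) : ℕ :=
  sInf (Set.range G.mecc)

/-- Diameter: the maximum eccentricity. -/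
noncomputable def SimpleGraph.mdiam {V : Type*} (G : SimpleGraph V) : ℕ :=
  sSup (Set.range G.mecc)

/-- The center: the set of vertices of minimum eccentricity. -/
noncomputable def SimpleGraph.mcenter {V : Type*} (G : SimpleGraph V) : Set V :=
  {v | G.mecc v = G.mrad}

/-- The annulus: the set of vertices of intermediate eccentricity. -/
noncomputable def SimpleGraph.mannulus {V : Type*} (G : SimpleGraph V) : Set V :=
  {v | G.mrad < G.mecc v ∧ G.mecc v < G.mdiam}

/-- The periphery: the set of vertices of maximum eccentricity. -/
noncomputable def SimpleGraph.mperiphery {V : Type*} (G : SimpleGraph V) : Set V :=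
  {v | G.mecc v = G.mdiam}

/-!
If the annulus is nonempty then `rad + 2 ≤ diam ≤ 2 rad`, so `diam ≥ 4`. The antipode of a
peripheral vertex is again peripheral, so the peripheral subgraph has radius at least `diam ≥ 4`.
A connected graph of radius `r` has at least `2 r` vertices: around a central vertex every distance
layer strictly between `0` and `r` has two vertices, since if layer `i` were a single vertex `w`, the
neighbour of the centre towards `w` would have smaller eccentricity. Hence `|P| ≥ 8` and
`n = 3 |P| ≥ 24`.

Conversely, for `k ≥ 8` stack three paths on `k` vertices as levels `0, 1, 2`, join levels `0` and
`1` completely and levels `1` and `2` by a perfect matching: level `ℓ` is exactly the set of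
vertices of eccentricity `ℓ + 2`.
-/

lemma Finset.two_mul_le_sum_range_succ {r : ℕ} (f : ℕ → ℕ) (h₀ : 1 ≤ f 0) (hr : 1 ≤ f r)
    (h : ∀ i, 0 < i → i < r → 2 ≤ f i) : 2 * r ≤ ∑ i ∈ Finset.range (r + 1), f i := by
  rcases Nat.eq_zero_or_pos r with rfl | hpos
  · simp
  obtain ⟨m, rfl⟩ := Nat.exists_eq_add_one.2 hpos
  have hmid : ∑ i ∈ Finset.range m, 2 ≤ ∑ i ∈ Finset.range m, f (i + 1) :=
    Finset.sum_le_sum fun i hi => h _ (by omega) (by simp only [Finset.mem_range] at hi; omega)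
  rw [Finset.sum_range_succ, Finset.sum_range_succ']
  simp only [Finset.sum_const, Finset.card_range, smul_eq_mul] at hmid
  omega

namespace SimpleGraph

variable {V W : Type*} {G : SimpleGraph V} {G' : SimpleGraph W} {u v : V}

lemma Hom.dist_le (f : G →g G') (h : G.Reachable u v) : G'.dist (f u) (f v) ≤ G.dist u v := by
  obtain ⟨p, hp⟩ := h.exists_walk_length_eq_dist
  simpa [hp] using SimpleGraph.dist_le (p.map f)

lemma Iso.dist_eq (f : G ≃g G') (u v : V) : G'.dist (f u) (f v) = G.dist u v := by
  by_cases h : G.Reachable u v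
  · refine le_antisymm (f.toHom.dist_le h) ?_
    simpa using f.symm.toHom.dist_le (h.map f.toHom)
  · have h' : ¬G'.Reachable (f u) (f v) := fun h' => h (by simpa using h'.map f.symm.toHom)
    rw [dist_eq_zero_of_not_reachable h, dist_eq_zero_of_not_reachable h']

lemma Reachable.exists_dist_eq_of_le_dist (h : G.Reachable u v) {i : ℕ} (hi : i ≤ G.dist u v) :
    ∃ w, G.dist u w = i ∧ G.dist w v = G.dist u v - i := by
  obtain ⟨p, hp⟩ := h.exists_walk_length_eq_dist
  have h₁ := dist_le (p.take i)
  have h₂ := dist_le (p.drop i)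
  have h₃ := (p.take i).reachable.dist_triangle_left v
  simp only [Walk.take_length, Walk.drop_length] at h₁ h₂
  exact ⟨p.getVert i, by omega, by omega⟩

lemma Walk.apply_le_apply_add_length (f : V → ℕ) (hf : ∀ a b, G.Adj a b → f a ≤ f b + 1)
    (p : G.Walk u v) : f u ≤ f v + p.length := by
  induction p with
  | nil => simp
  | cons h _ ih => have := hf _ _ h; simp only [Walk.length_cons]; omega

lemma Reachable.apply_le_apply_add_dist (f : V → ℕ) (hf : ∀ a b, G.Adj a b → f a ≤ f b + 1)
    (h : G.Reachable u v) : f u ≤ f v + G.dist u v := by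
  obtain ⟨p, hp⟩ := h.exists_walk_length_eq_dist
  exact hp ▸ p.apply_le_apply_add_length f hf

lemma mecc_le_of_forall_dist_le {m : ℕ} (h : ∀ u, G.dist v u ≤ m) : G.mecc v ≤ m :=
  csSup_le ⟨_, v, rfl⟩ (Set.forall_mem_range.2 h)

lemma mrad_le_mecc (v : V) : G.mrad ≤ G.mecc v :=
  Nat.sInf_le ⟨v, rfl⟩

lemma exists_mecc_eq_mrad [Nonempty V] : ∃ v, G.mecc v = G.mrad :=
  Nat.sInf_mem (Set.range_nonempty _)

lemma Iso.mecc_apply (f : G ≃g G') (v : V) : G'.mecc (f v) = G.mecc v := by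
  have : G'.dist (f v) ∘ f = G.dist v := funext (f.dist_eq v)
  rw [mecc, mecc, ← this, f.surjective.range_comp]

lemma Iso.range_mecc (f : G ≃g G') : Set.range G'.mecc = Set.range G.mecc := by
  rw [← f.surjective.range_comp, show G'.mecc ∘ f = G.mecc from funext f.mecc_apply]

lemma Iso.mrad_eq (f : G ≃g G') : G'.mrad = G.mrad := by
  rw [mrad, mrad, f.range_mecc]

lemma Iso.mdiam_eq (f : G ≃g G') : G'.mdiam = G.mdiam := by
  rw [mdiam, mdiam, f.range_mecc]

lemma Iso.bijOn_mcenter (f : G ≃g G') : Set.BijOn f G.mcenter G'.mcenter :=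
  f.toEquiv.bijOn fun v => by simp [mcenter, f.mecc_apply, f.mrad_eq]

lemma Iso.bijOn_mannulus (f : G ≃g G') : Set.BijOn f G.mannulus G'.mannulus :=
  f.toEquiv.bijOn fun v => by simp [mannulus, f.mecc_apply, f.mrad_eq, f.mdiam_eq]

lemma Iso.bijOn_mperiphery (f : G ≃g G') : Set.BijOn f G.mperiphery G'.mperiphery :=
  f.toEquiv.bijOn fun v => by simp [mperiphery, f.mecc_apply, f.mdiam_eq]

section Finite

variable [Finite V]

lemma dist_le_mecc (v u : V) : G.dist v u ≤ G.mecc v :=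
  le_csSup (Set.finite_range _).bddAbove ⟨u, rfl⟩

lemma exists_dist_eq_mecc (v : V) : ∃ u, G.dist v u = G.mecc v :=
  have : Nonempty V := ⟨v⟩
  Nat.sSup_mem (Set.range_nonempty _) (Set.finite_range _).bddAbove

lemma mecc_le_mdiam (v : V) : G.mecc v ≤ G.mdiam :=
  le_csSup (Set.finite_range _).bddAbove ⟨v, rfl⟩

lemma exists_mecc_eq_mdiam [Nonempty V] : ∃ v, G.mecc v = G.mdiam :=
  Nat.sSup_mem (Set.range_nonempty _) (Set.finite_range _).bddAbove

lemma Connected.mdiam_le_two_mul_mrad (hG : G.Connected) : G.mdiam ≤ 2 * G.mrad := by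
  have := hG.nonempty
  obtain ⟨c, hc⟩ := G.exists_mecc_eq_mrad
  obtain ⟨p, hp⟩ := G.exists_mecc_eq_mdiam
  obtain ⟨u, hu⟩ := G.exists_dist_eq_mecc p
  have hpc := G.dist_le_mecc c p
  have hcu := G.dist_le_mecc c u
  have := hG.dist_triangle (u := p) (v := c) (w := u)
  rw [dist_comm] at hpc
  omega

/-- If layer `i` of a central vertex `v` were a single vertex `w`, the neighbour of `v` towards `w`
would see every vertex within `mrad - 1`: the far ones through `w`, the near ones through `v`. -/
lemma Connected.exists_ne_at_dist_of_lt_mrad (hG : G.Connected) (hv : G.mecc v = G.mrad) {i : ℕ}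
    (hi₀ : 0 < i) (hi : i < G.mrad) : ∃ w w', w ≠ w' ∧ G.dist v w = i ∧ G.dist v w' = i := by
  obtain ⟨u, hu⟩ := G.exists_dist_eq_mecc v
  obtain ⟨w, hw, -⟩ := (hG.preconnected v u).exists_dist_eq_of_le_dist (i := i) (by omega)
  by_contra! hsingle
  have huniq : ∀ x, G.dist v x = i → x = w := fun x hx =>
    not_not.1 fun hxw => hsingle x w hxw hx hw
  obtain ⟨a, hva, haw⟩ := (hG.preconnected v w).exists_dist_eq_of_le_dist (i := 1) (by omega)
  have hav : G.dist a v = 1 := by rw [dist_comm, hva]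
  have hecc : G.mecc a ≤ G.mrad - 1 := by
    refine mecc_le_of_forall_dist_le fun x => ?_
    have hvx := G.dist_le_mecc v x
    rcases lt_or_ge (G.dist v x) i with hnear | hfar
    · have := hG.dist_triangle (u := a) (v := v) (w := x)
      omega
    · obtain ⟨y, hy, hyx⟩ := (hG.preconnected v x).exists_dist_eq_of_le_dist hfar
      rw [huniq y hy] at hyx
      have := hG.dist_triangle (u := a) (v := w) (w := x)
      omega
  have := G.mrad_le_mecc a
  omega

lemma Connected.two_mul_mrad_le_card (hG : G.Connected) : 2 * G.mrad ≤ Nat.card V := by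
  classical
  have := Fintype.ofFinite V
  have := hG.nonempty
  obtain ⟨v, hv⟩ := G.exists_mecc_eq_mrad
  obtain ⟨u, hu⟩ := G.exists_dist_eq_mecc v
  let layer (i : ℕ) : Finset V := {x | G.dist v x = i}
  have hcard : Nat.card V = ∑ i ∈ Finset.range (G.mrad + 1), (layer i).card := by
    rw [Nat.card_eq_fintype_card, ← Finset.card_univ]
    refine Finset.card_eq_sum_card_fiberwise fun x _ => ?_
    have := G.dist_le_mecc v x
    simp only [Finset.coe_range, Set.mem_Iio]
    omega
  rw [hcard]
  refine Finset.two_mul_le_sum_range_succ _ ?_ ?_ fun i hi₀ hi => ?_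
  · exact Finset.card_pos.2 ⟨v, by simp [layer]⟩
  · exact Finset.card_pos.2 ⟨u, by simp [layer, hu, hv]⟩
  · obtain ⟨w, w', hne, hw, hw'⟩ := hG.exists_ne_at_dist_of_lt_mrad hv hi₀ hi
    exact Finset.one_lt_card.2 ⟨w, by simpa [layer] using hw, w', by simpa [layer] using hw', hne⟩

lemma mdiam_le_mrad_induce_mperiphery (hP : (G.induce G.mperiphery).Connected) :
    G.mdiam ≤ (G.induce G.mperiphery).mrad := by
  have := hP.nonempty
  obtain ⟨x, hx⟩ := (G.induce G.mperiphery).exists_mecc_eq_mrad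
  obtain ⟨y, hy⟩ := G.exists_dist_eq_mecc x
  have hxP : G.mecc x = G.mdiam := x.2
  have hyP : y ∈ G.mperiphery :=
    le_antisymm (G.mecc_le_mdiam y) (by rw [← hxP, ← hy, dist_comm]; exact G.dist_le_mecc y x)
  calc G.mdiam = G.dist x y := by rw [hy, hxP]
    _ ≤ (G.induce G.mperiphery).dist x ⟨y, hyP⟩ :=
      (Embedding.induce G.mperiphery).toHom.dist_le (hP.preconnected x ⟨y, hyP⟩)
    _ ≤ (G.induce G.mperiphery).mrad := hx ▸ dist_le_mecc _ _

lemma ncard_mcenter_add_ncard_mannulus_add_ncard_mperiphery (h : G.mrad < G.mdiam) :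
    G.mcenter.ncard + G.mannulus.ncard + G.mperiphery.ncard = Nat.card V := by
  have hcover : G.mcenter ∪ G.mannulus ∪ G.mperiphery = Set.univ := by
    refine Set.eq_univ_of_forall fun v => ?_
    have := G.mrad_le_mecc v
    have := G.mecc_le_mdiam v
    by_cases hC : G.mecc v = G.mrad
    · exact .inl (.inl hC)
    by_cases hP : G.mecc v = G.mdiam
    · exact .inr hP
    exact .inl (.inr (show G.mrad < G.mecc v ∧ G.mecc v < G.mdiam by omega))
  rw [← Set.ncard_univ, ← hcover, Set.ncard_union_eq, Set.ncard_union_eq]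
  · exact Set.disjoint_left.2 fun v (hC : G.mecc v = G.mrad) (hA : _ ∧ _) => by omega
  · refine Set.disjoint_left.2 fun v hv (hP : G.mecc v = G.mdiam) => ?_
    rcases hv with (hC : G.mecc v = G.mrad) | (hA : G.mrad < G.mecc v ∧ G.mecc v < G.mdiam)
      <;> omega

end Finite

def HasConnectedPairwiseIsoMetricSubgraphs (G : SimpleGraph V) : Prop :=
  G.Connected ∧
    (G.induce G.mcenter).Connected ∧ (G.induce G.mannulus).Connected ∧
    (G.induce G.mperiphery).Connected ∧
    Nonempty (G.induce G.mcenter ≃g G.induce G.mannulus) ∧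
    Nonempty (G.induce G.mannulus ≃g G.induce G.mperiphery) ∧
    Nonempty (G.induce G.mcenter ≃g G.induce G.mperiphery)

lemma HasConnectedPairwiseIsoMetricSubgraphs.of_iso (f : G ≃g G')
    (h : G'.HasConnectedPairwiseIsoMetricSubgraphs) : G.HasConnectedPairwiseIsoMetricSubgraphs := by
  obtain ⟨hG, hC, hA, hP, ⟨eCA⟩, ⟨eAP⟩, ⟨eCP⟩⟩ := h
  let fC := f.induce f.bijOn_mcenter
  let fA := f.induce f.bijOn_mannulus
  let fP := f.induce f.bijOn_mperiphery
  exact ⟨f.connected_iff.2 hG, fC.connected_iff.2 hC, fA.connected_iff.2 hA,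
    fP.connected_iff.2 hP, ⟨fC.trans (eCA.trans fA.symm)⟩, ⟨fA.trans (eAP.trans fP.symm)⟩,
    ⟨fC.trans (eCP.trans fP.symm)⟩⟩

lemma HasConnectedPairwiseIsoMetricSubgraphs.card [Finite V]
    (h : G.HasConnectedPairwiseIsoMetricSubgraphs) : 24 ≤ Nat.card V ∧ 3 ∣ Nat.card V := by
  obtain ⟨hG, -, hA, hP, ⟨eCA⟩, ⟨eAP⟩, -⟩ := h
  obtain ⟨⟨a, ha⟩⟩ := hA.nonempty
  have ha : G.mrad < G.mecc a ∧ G.mecc a < G.mdiam := ha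
  have hCA : G.mcenter.ncard = G.mannulus.ncard := by
    simpa only [Nat.card_coe_set_eq] using Nat.card_congr eCA.toEquiv
  have hAP : G.mannulus.ncard = G.mperiphery.ncard := by
    simpa only [Nat.card_coe_set_eq] using Nat.card_congr eAP.toEquiv
  have hPcard : 2 * G.mdiam ≤ G.mperiphery.ncard := by
    have := mdiam_le_mrad_induce_mperiphery hP
    have := hP.two_mul_mrad_le_card
    rw [Nat.card_coe_set_eq] at this
    omega
  have := hG.mdiam_le_two_mul_mrad
  have := ncard_mcenter_add_ncard_mannulus_add_ncard_mperiphery (G := G) (by omega)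
  exact ⟨by omega, ⟨G.mperiphery.ncard, by omega⟩⟩

/-- Three copies of the path on `Fin k`, as levels `0, 1, 2`; levels `0` and `1` are completely
joined, and levels `1` and `2` by the matching of equal positions. -/
def stackedPaths (k : ℕ) : SimpleGraph (Fin k × Fin 3) where
  Adj a b := (a.2 = b.2 ∧ (pathGraph k).Adj a.1 b.1) ∨ a.2.val + b.2.val = 1 ∨
    (a.1 = b.1 ∧ a.2.val + b.2.val = 3)
  symm := ⟨by
    rintro a b (⟨h, hab⟩ | h | ⟨h, h'⟩)
    exacts [.inl ⟨h.symm, hab.symm⟩, .inr (.inl (by omega)), .inr (.inr ⟨h.symm, by omega⟩)]⟩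
  loopless := ⟨by
    rintro a (⟨-, h⟩ | h | ⟨-, h⟩)
    exacts [h.ne rfl, by omega, by omega]⟩

variable {k : ℕ}

lemma stackedPaths_adj {a b : Fin k × Fin 3} : (stackedPaths k).Adj a b ↔
    (a.2.val = b.2.val ∧ (a.1.val + 1 = b.1.val ∨ b.1.val + 1 = a.1.val)) ∨
      a.2.val + b.2.val = 1 ∨ (a.1.val = b.1.val ∧ a.2.val + b.2.val = 3) := by
  simp only [stackedPaths, pathGraph_adj, Fin.ext_iff]

lemma stackedPaths_adj_zero_one (i j : Fin k) : (stackedPaths k).Adj (i, 0) (j, 1) := by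
  simp [stackedPaths_adj]

lemma stackedPaths_adj_one_two (i : Fin k) : (stackedPaths k).Adj (i, 1) (i, 2) := by
  simp [stackedPaths_adj]

lemma stackedPaths_connected (hk : 0 < k) : (stackedPaths k).Connected := by
  refine (connected_iff_exists_forall_reachable _).2 ⟨(⟨0, hk⟩, 0), ?_⟩
  rintro ⟨j, ℓ⟩
  have hj : (stackedPaths k).Reachable (⟨0, hk⟩, 0) (j, 1) :=
    (stackedPaths_adj_zero_one _ _).reachable
  obtain rfl | rfl | rfl : ℓ = 0 ∨ ℓ = 1 ∨ ℓ = 2 := by omega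
  · exact (stackedPaths_adj_zero_one _ _).reachable.trans
      (stackedPaths_adj_zero_one j ⟨0, hk⟩).symm.reachable
  · exact hj
  · exact hj.trans (stackedPaths_adj_one_two j).reachable

/-- Route every path through level one: `(i, ℓ)` descends to level `0`, crosses to `(j, 1)`,
and then steps to `(j, m)`. -/
lemma stackedPaths_dist_le (a b : Fin k × Fin 3) : (stackedPaths k).dist a b ≤ a.2.val + 2 := by
  obtain ⟨i, ℓ⟩ := a
  obtain ⟨j, m⟩ := b
  show (stackedPaths k).dist (i, ℓ) (j, m) ≤ ℓ.val + 2
  have hc := stackedPaths_connected i.pos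
  have h01 (i j : Fin k) : (stackedPaths k).dist (i, 0) (j, 1) = 1 :=
    dist_eq_one_iff_adj.2 (stackedPaths_adj_zero_one i j)
  have h10 (i j : Fin k) : (stackedPaths k).dist (j, 1) (i, 0) = 1 := by rw [dist_comm, h01]
  have h21 (i : Fin k) : (stackedPaths k).dist (i, 2) (i, 1) = 1 :=
    dist_eq_one_iff_adj.2 (stackedPaths_adj_one_two i).symm
  have h11 (i j : Fin k) : (stackedPaths k).dist (i, 1) (j, 1) ≤ 2 := by
    simpa [h10, h01] using hc.dist_triangle (u := (i, 1)) (v := (i, 0)) (w := (j, 1))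
  have hto : (stackedPaths k).dist (i, ℓ) (j, 1) ≤ ℓ.val + 1 := by
    obtain rfl | rfl | rfl : ℓ = 0 ∨ ℓ = 1 ∨ ℓ = 2 := by omega
    · exact (h01 i j).le
    · exact h11 i j
    · have := hc.dist_triangle (u := (i, 2)) (v := (i, 1)) (w := (j, 1))
      rw [h21] at this
      have := h11 i j
      change _ ≤ 2 + 1
      omega
  have hfrom : (stackedPaths k).dist (j, 1) (j, m) ≤ 1 := by
    obtain rfl | rfl | rfl : m = 0 ∨ m = 1 ∨ m = 2 := by omega
    · exact (h10 j j).le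
    · simp
    · rw [dist_comm, h21]
  have := hc.dist_triangle (u := (i, ℓ)) (v := (j, 1)) (w := (j, m))
  omega

/-- The potential `(x, ℓ) ↦ clamp(|x - i|, 2 - ℓ, 2 + ℓ)` changes by at most one along every edge;
it is `2 - ℓ` at `(i, ℓ)` and `4` at `(j, 2)` when `|i - j| ≥ 4`. -/
lemma stackedPaths_le_dist {i j : Fin k} (hij : i.val + 4 ≤ j.val ∨ j.val + 4 ≤ i.val)
    (ℓ : Fin 3) : ℓ.val + 2 ≤ (stackedPaths k).dist (j, 2) (i, ℓ) := by
  let f (a : Fin k × Fin 3) : ℕ := max (2 - a.2.val) (min (2 + a.2.val) (a.1 - i + (i - a.1)))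
  have hf : ∀ a b, (stackedPaths k).Adj a b → f a ≤ f b + 1 := by
    intro a b hab
    rw [stackedPaths_adj] at hab
    have := a.2.isLt
    have := b.2.isLt
    simp only [f]
    omega
  have := ((stackedPaths_connected i.pos).preconnected (j, 2) (i, ℓ)).apply_le_apply_add_dist f hf
  simp only [f] at this
  omega

lemma stackedPaths_mecc (hk : 8 ≤ k) (a : Fin k × Fin 3) :
    (stackedPaths k).mecc a = a.2.val + 2 := by
  refine le_antisymm (mecc_le_of_forall_dist_le (stackedPaths_dist_le a)) ?_
  obtain ⟨i, ℓ⟩ := a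
  obtain ⟨j, hj⟩ : ∃ j : Fin k, i.val + 4 ≤ j.val ∨ j.val + 4 ≤ i.val := by
    by_cases hi : i.val < 4
    · exact ⟨⟨i.val + 4, by omega⟩, .inl le_rfl⟩
    · exact ⟨⟨i.val - 4, by omega⟩, .inr (by simp only; omega)⟩
  calc ℓ.val + 2 ≤ (stackedPaths k).dist (j, 2) (i, ℓ) := stackedPaths_le_dist hj ℓ
    _ = (stackedPaths k).dist (i, ℓ) (j, 2) := dist_comm
    _ ≤ (stackedPaths k).mecc (i, ℓ) := dist_le_mecc _ _

lemma stackedPaths_mrad (hk : 8 ≤ k) : (stackedPaths k).mrad = 2 := by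
  refine le_antisymm (Nat.sInf_le ⟨(⟨0, by omega⟩, 0), stackedPaths_mecc hk _⟩) ?_
  refine le_csInf ⟨_, (⟨0, by omega⟩, 0), rfl⟩ ?_
  rintro _ ⟨a, rfl⟩
  simp [stackedPaths_mecc hk]

lemma stackedPaths_mdiam (hk : 8 ≤ k) : (stackedPaths k).mdiam = 4 := by
  refine le_antisymm (csSup_le ⟨_, (⟨0, by omega⟩, 0), rfl⟩ ?_) ?_
  · rintro _ ⟨a, rfl⟩
    have := a.2.isLt
    rw [stackedPaths_mecc hk]
    omega
  · exact (stackedPaths_mecc hk (⟨0, by omega⟩, 2)).symm.le.trans (mecc_le_mdiam _)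

lemma stackedPaths_mcenter (hk : 8 ≤ k) : (stackedPaths k).mcenter = {a | a.2 = 0} := by
  ext a
  change (stackedPaths k).mecc a = (stackedPaths k).mrad ↔ a.2 = 0
  rw [stackedPaths_mecc hk, stackedPaths_mrad hk, Fin.ext_iff]
  omega

lemma stackedPaths_mannulus (hk : 8 ≤ k) : (stackedPaths k).mannulus = {a | a.2 = 1} := by
  ext a
  change (stackedPaths k).mrad < (stackedPaths k).mecc a ∧
    (stackedPaths k).mecc a < (stackedPaths k).mdiam ↔ a.2 = 1
  rw [stackedPaths_mecc hk, stackedPaths_mrad hk, stackedPaths_mdiam hk, Fin.ext_iff]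
  omega

lemma stackedPaths_mperiphery (hk : 8 ≤ k) : (stackedPaths k).mperiphery = {a | a.2 = 2} := by
  ext a
  change (stackedPaths k).mecc a = (stackedPaths k).mdiam ↔ a.2 = 2
  rw [stackedPaths_mecc hk, stackedPaths_mdiam hk, Fin.ext_iff]
  omega

def stackedPathsLevelIso (ℓ : Fin 3) : (stackedPaths k).induce {a | a.2 = ℓ} ≃g pathGraph k where
  toFun a := a.1.1
  invFun i := ⟨(i, ℓ), rfl⟩
  left_inv a := Subtype.ext (Prod.ext rfl a.2.symm)
  right_inv _ := rfl
  map_rel_iff' {a b} := by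
    have ha : a.1.2.val = ℓ.val := congrArg Fin.val a.2
    have hb : b.1.2.val = ℓ.val := congrArg Fin.val b.2
    simp only [Equiv.coe_fn_mk, comap_adj, Function.Embedding.coe_subtype, stackedPaths_adj,
      pathGraph_adj]
    omega

lemma stackedPaths_hasConnectedPairwiseIsoMetricSubgraphs (hk : 8 ≤ k) :
    (stackedPaths k).HasConnectedPairwiseIsoMetricSubgraphs := by
  have hlevel (ℓ : Fin 3) : ((stackedPaths k).induce {a | a.2 = ℓ}).Connected := by
    obtain ⟨m, rfl⟩ : ∃ m, k = m + 1 := ⟨k - 1, by omega⟩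
    exact (stackedPathsLevelIso ℓ).connected_iff.2 (pathGraph_connected m)
  let e (ℓ ℓ' : Fin 3) := (stackedPathsLevelIso (k := k) ℓ).trans (stackedPathsLevelIso ℓ').symm
  rw [HasConnectedPairwiseIsoMetricSubgraphs, stackedPaths_mcenter hk, stackedPaths_mannulus hk,
    stackedPaths_mperiphery hk]
  exact ⟨stackedPaths_connected (by omega), hlevel 0, hlevel 1, hlevel 2, ⟨e 0 1⟩, ⟨e 1 2⟩,
    ⟨e 0 2⟩⟩

end SimpleGraph

theorem exists_graph_with_pairwise_isomorphic_connected_metric_subgraphs_iff_general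
    (n : ℕ) :
    (∃ G : SimpleGraph (Fin n), G.Connected ∧
        (G.induce G.mcenter).Connected ∧ (G.induce G.mannulus).Connected ∧
        (G.induce G.mperiphery).Connected ∧
        Nonempty (G.induce G.mcenter ≃g G.induce G.mannulus) ∧
        Nonempty (G.induce G.mannulus ≃g G.induce G.mperiphery) ∧
        Nonempty (G.induce G.mcenter ≃g G.induce G.mperiphery)) ↔
      (24 ≤ n ∧ 3 ∣ n) := by
  constructor
  · rintro ⟨G, hG⟩
    simpa using SimpleGraph.HasConnectedPairwiseIsoMetricSubgraphs.card hG
  · rintro ⟨hn, k, rfl⟩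
    let e : Fin (3 * k) ≃ Fin k × Fin 3 := (finCongr (mul_comm 3 k)).trans finProdFinEquiv.symm
    exact ⟨_, (SimpleGraph.stackedPaths_hasConnectedPairwiseIsoMetricSubgraphs (by omega)).of_iso
      (SimpleGraph.Iso.comap e _)⟩

theorem exists_graph_with_pairwise_isomorphic_connected_metric_subgraphs_iff
    (n : ℕ) (hn : 0 < n) :
    (∃ G : SimpleGraph (Fin n), G.Connected ∧
        (G.induce G.mcenter).Connected ∧ (G.induce G.mannulus).Connected ∧
        (G.induce G.mperiphery).Connected ∧
        Nonempty (G.induce G.mcenter ≃g G.induce G.mannulus) ∧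
        Nonempty (G.induce G.mannulus ≃g G.induce G.mperiphery) ∧
        Nonempty (G.induce G.mcenter ≃g G.induce G.mperiphery)) ↔
      (24 ≤ n ∧ 3 ∣ n) :=
  exists_graph_with_pairwise_isomorphic_connected_metric_subgraphs_iff_general n
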